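/- arXiv:2508.06653 — 8 statements merged into one kernel-verified Lean document; each statement's English description precedes it below -/
import Mathlib

section
/- Let K be a field with at least 3 elements and n ≥ 2. The maximal dimension of an affine subspace of M(n×n, K) all of whose elements are nilpotent of rank exactly 1 is n-2. -/
/-!
A rank-one matrix is `vecMulVec x y` with `x, y ≠ 0`, and it is nilpotent iff `x ⬝ᵥ y = 0`.
If two rank-one matrices share neither their column line nor their row line, every combination
`a • M + b • N` with `a, b ≠ 0` has rank two. Since `|K| ≥ 3`, the affine line through two
members of `P + Z` contains such a combination, so any two members share a column line or a row
line, and then all of them share one column line `K ∙ x` or one row line `K ∙ y`. In the column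
case `P + Z` lies in the `(n - 1)`-dimensional space `{vecMulVec x y | x ⬝ᵥ y = 0}` and avoids
`0`, so `Z` is a proper subspace of it; the row case is symmetric. Conversely, the matrices
`vecMulVec e₀ (e₁ + w)` with `w₀ = w₁ = 0` form an `(n - 2)`-dimensional example.
-/

open Matrix Module

theorem Submodule.span_singleton_eq_of_mem {K V : Type*} [Field K] [AddCommGroup V]
    [Module K V] {x y : V} (hx : x ≠ 0) (h : x ∈ K ∙ y) : K ∙ x = K ∙ y := by
  obtain ⟨c, rfl⟩ := Submodule.mem_span_singleton.1 h
  exact Submodule.span_singleton_smul_eq (isUnit_iff_ne_zero.2 (left_ne_zero_of_smul hx)) y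

theorem Submodule.lt_of_forall_add_mem {R M : Type*} [Ring R] [AddCommGroup M] [Module R M]
    {Z W : Submodule R M} {P : M} (hmem : ∀ A ∈ Z, P + A ∈ W) (hne : ∀ A ∈ Z, P + A ≠ 0) :
    Z < W := by
  have hP : P ∈ W := by simpa using hmem 0 Z.zero_mem
  refine lt_of_le_of_ne (fun A hA => by simpa using W.sub_mem (hmem A hA) hP) fun hZW => ?_
  exact hne (-P) (hZW ▸ W.neg_mem hP) (add_neg_cancel P)

theorem forall_eq_or_forall_eq_of_forall_eq_or_eq {ι α β : Type*} {f : ι → α} {g : ι → β}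
    (h : ∀ i j, f i = f j ∨ g i = g j) : (∀ i j, f i = f j) ∨ ∀ i j, g i = g j := by
  by_cases hf : ∀ i j, f i = f j
  · exact .inl hf
  obtain ⟨a, b, hab⟩ : ∃ a b, f a ≠ f b := by simpa using hf
  refine .inr ?_
  have hgab := (h a b).resolve_left hab
  suffices hg : ∀ c, g c = g a by intro i j; rw [hg i, hg j]
  intro c
  by_contra hc
  have hca := (h c a).resolve_right hc
  have hcb := (h c b).resolve_right (hgab ▸ hc)
  exact hab (hca.symm.trans hcb)

namespace Matrix

section

variable {K : Type*} [Field K] {m n : Type*}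

theorem vecMulVecBilin_injective {x : n → K} (hx : x ≠ 0) :
    Function.Injective (vecMulVecBilin K K x : (n → K) →ₗ[K] Matrix n n K) :=
  (injective_iff_map_eq_zero _).2 fun _ hy => (vecMulVec_eq_zero.1 hy).resolve_left hx

theorem vecMulVecBilin_flip_injective {y : n → K} (hy : y ≠ 0) :
    Function.Injective ((vecMulVecBilin K K).flip y : (n → K) →ₗ[K] Matrix n n K) :=
  (injective_iff_map_eq_zero _).2 fun _ hx =>
    (vecMulVec_eq_zero.1 (by simpa using hx)).resolve_right hy

variable [Fintype n]

theorem exists_dotProduct_eq_zero_ne_zero_of_notMem_span {y₁ y₂ : n → K}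
    (h : y₁ ∉ K ∙ y₂) : ∃ v, v ⬝ᵥ y₂ = 0 ∧ v ⬝ᵥ y₁ ≠ 0 := by
  classical
  obtain ⟨f, hf₁, hf₂⟩ := Submodule.exists_dual_map_eq_bot_of_notMem h inferInstance
  refine ⟨(dotProductEquiv K n).symm f, ?_, ?_⟩
  · have : f y₂ ∈ (K ∙ y₂).map f :=
      Submodule.mem_map_of_mem (Submodule.mem_span_singleton_self y₂)
    rw [hf₂, Submodule.mem_bot] at this
    simpa [← dotProductEquiv_apply_apply] using this
  · simpa [← dotProductEquiv_apply_apply] using hf₁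

theorem mem_range_mulVecLin_vecMulVec_add {x₁ x₂ : m → K} {y₁ y₂ : n → K}
    (h : y₁ ∉ K ∙ y₂) :
    x₁ ∈ LinearMap.range (vecMulVec x₁ y₁ + vecMulVec x₂ y₂).mulVecLin := by
  obtain ⟨v, hv₂, hv₁⟩ := exists_dotProduct_eq_zero_ne_zero_of_notMem_span h
  refine ⟨(v ⬝ᵥ y₁)⁻¹ • v, ?_⟩
  simp [vecMulVec_mulVec, dotProduct_comm _ v, hv₂, hv₁]

theorem range_mulVecLin_vecMulVec (x : m → K) {y : n → K} (hy : y ≠ 0) :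
    LinearMap.range (vecMulVec x y).mulVecLin = K ∙ x := by
  refine le_antisymm ?_ ((Submodule.span_singleton_le_iff_mem _ _).2 ?_)
  · rintro _ ⟨v, rfl⟩
    simp [vecMulVec_mulVec, Submodule.mem_span_singleton_self, Submodule.smul_mem]
  · simpa using
      mem_range_mulVecLin_vecMulVec_add (x₁ := x) (x₂ := 0) (y₂ := 0) (by simpa using hy)

theorem rank_vecMulVec_of_ne_zero {x : m → K} {y : n → K} (hx : x ≠ 0) (hy : y ≠ 0) :
    (vecMulVec x y).rank = 1 := by
  rw [rank, range_mulVecLin_vecMulVec x hy, finrank_span_singleton hx]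

theorem span_eq_or_span_eq_of_rank_vecMulVec_add_eq_one {x₁ x₂ : m → K} {y₁ y₂ : n → K}
    (hx₁ : x₁ ≠ 0) (hy₁ : y₁ ≠ 0) (hx₂ : x₂ ≠ 0) (hy₂ : y₂ ≠ 0)
    (h : (vecMulVec x₁ y₁ + vecMulVec x₂ y₂).rank = 1) :
    K ∙ x₁ = K ∙ x₂ ∨ K ∙ y₁ = K ∙ y₂ := by
  by_contra! ⟨hx, hy⟩
  have h₁ : y₁ ∉ K ∙ y₂ := fun h => hy (Submodule.span_singleton_eq_of_mem hy₁ h)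
  have h₂ : y₂ ∉ K ∙ y₁ := fun h => hy (Submodule.span_singleton_eq_of_mem hy₂ h).symm
  have hrange : K ∙ x₂ = LinearMap.range (vecMulVec x₁ y₁ + vecMulVec x₂ y₂).mulVecLin := by
    refine Submodule.eq_of_le_of_finrank_eq ?_ (by rw [finrank_span_singleton hx₂]; exact h.symm)
    rw [Submodule.span_singleton_le_iff_mem, add_comm]
    exact mem_range_mulVecLin_vecMulVec_add h₂
  exact hx (Submodule.span_singleton_eq_of_mem hx₁
    (hrange ▸ mem_range_mulVecLin_vecMulVec_add h₁))

variable [DecidableEq n]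

theorem exists_eq_vecMulVec_of_rank_eq_one {M : Matrix m n K} (h : M.rank = 1) :
    ∃ x y, x ≠ 0 ∧ y ≠ 0 ∧ M = vecMulVec x y := by
  have h' : finrank K (LinearMap.range M.mulVecLin) = 1 := h
  obtain ⟨v, hv, hspan⟩ := _root_.finrank_eq_one_iff'.1 h'
  have hcol (j : n) : ∃ c : K, c • (v : m → K) = M.col j := by
    obtain ⟨c, hc⟩ := hspan ⟨M *ᵥ Pi.single j 1, LinearMap.mem_range_self M.mulVecLin _⟩
    exact ⟨c, by simpa [mulVec_single_one] using congrArg Subtype.val hc⟩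
  choose y hy using hcol
  have hM : M = vecMulVec v y := by
    ext i j
    simpa [vecMulVec_apply, mul_comm] using (congrFun (hy j) i).symm
  refine ⟨v, y, fun h0 => hv (Subtype.ext h0), fun h0 => ?_, hM⟩
  have : vecMulVec (v : m → K) y = 0 := by ext; simp [vecMulVec_apply, h0]
  rw [hM, this, rank_zero] at h
  exact zero_ne_one h

theorem isNilpotent_vecMulVec_iff {x y : n → K} :
    IsNilpotent (vecMulVec x y) ↔ x ⬝ᵥ y = 0 := by
  refine ⟨fun h => ?_, fun h => ⟨2, ?_⟩⟩
  · simpa [trace_vecMulVec] using (isNilpotent_trace_of_isNilpotent h).eq_zero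
  · rw [sq, vecMulVec_mul_vecMulVec, dotProduct_comm, h, zero_smul, vecMulVec_zero]

theorem finrank_ker_dotProductBilin {v : n → K} (hv : v ≠ 0) :
    finrank K (LinearMap.ker (dotProductBilin K K v)) = Fintype.card n - 1 := by
  have := Module.Dual.finrank_ker_add_one_of_ne_zero ((dotProductEquiv K n).map_ne_zero_iff.2 hv)
  rw [Module.finrank_fintype_fun_eq_card] at this
  exact Nat.eq_sub_of_add_eq this

theorem exists_forall_eq_vecMulVec_of_rank_eq_one (hK : (3 : Cardinal) ≤ Cardinal.mk K)
    {Z : Submodule K (Matrix m n K)} {P : Matrix m n K} (hrank : ∀ A ∈ Z, (P + A).rank = 1) :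
    (∃ x ≠ 0, ∀ A ∈ Z, ∃ y, P + A = vecMulVec x y) ∨
      (∃ y ≠ 0, ∀ A ∈ Z, ∃ x, P + A = vecMulVec x y) := by
  choose x y hx hy hxy using fun A : Z => exists_eq_vecMulVec_of_rank_eq_one (hrank A A.2)
  have hpair (A B : Z) : K ∙ x A = K ∙ x B ∨ K ∙ y A = K ∙ y B := by
    obtain ⟨t, ht₀, ht₁⟩ := Cardinal.exists_ne_ne_of_three_le hK 0 1
    have ht : 1 - t ≠ 0 := sub_ne_zero.2 ht₁.symm
    have hcomb : vecMulVec ((1 - t) • x A) (y A) + vecMulVec (t • x B) (y B) =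
        P + ((1 - t) • (A : Matrix m n K) + t • (B : Matrix m n K)) := by
      rw [smul_vecMulVec, smul_vecMulVec, ← hxy, ← hxy]
      module
    have := span_eq_or_span_eq_of_rank_vecMulVec_add_eq_one (smul_ne_zero ht (hx A)) (hy A)
      (smul_ne_zero ht₀ (hx B)) (hy B)
      (hcomb ▸ hrank _ (Z.add_mem (Z.smul_mem _ A.2) (Z.smul_mem _ B.2)))
    rwa [Submodule.span_singleton_smul_eq ht.isUnit,
      Submodule.span_singleton_smul_eq ht₀.isUnit] at this
  rcases forall_eq_or_forall_eq_of_forall_eq_or_eq hpair with hcol | hrow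
  · refine .inl ⟨x 0, hx 0, fun A hA => ?_⟩
    obtain ⟨c, hc⟩ := Submodule.mem_span_singleton.1
      (hcol ⟨A, hA⟩ 0 ▸ Submodule.mem_span_singleton_self (x ⟨A, hA⟩))
    exact ⟨c • y ⟨A, hA⟩, by rw [hxy ⟨A, hA⟩, ← hc, smul_vecMulVec, vecMulVec_smul]⟩
  · refine .inr ⟨y 0, hy 0, fun A hA => ?_⟩
    obtain ⟨c, hc⟩ := Submodule.mem_span_singleton.1
      (hrow ⟨A, hA⟩ 0 ▸ Submodule.mem_span_singleton_self (y ⟨A, hA⟩))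
    exact ⟨c • x ⟨A, hA⟩, by rw [hxy ⟨A, hA⟩, ← hc, smul_vecMulVec, vecMulVec_smul]⟩

theorem finrank_le_card_sub_two_of_isNilpotent_rank_eq_one
    (hK : (3 : Cardinal) ≤ Cardinal.mk K) {Z : Submodule K (Matrix n n K)} {P : Matrix n n K}
    (h : ∀ A ∈ Z, IsNilpotent (P + A) ∧ (P + A).rank = 1) :
    finrank K Z ≤ Fintype.card n - 2 := by
  have hne (A) (hA : A ∈ Z) : P + A ≠ 0 := fun h0 => by simpa [h0] using (h A hA).2
  have hbound {V : Submodule K (n → K)} {Φ : (n → K) →ₗ[K] Matrix n n K}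
      (hΦ : Function.Injective Φ) (hV : finrank K V = Fintype.card n - 1)
      (hmem : ∀ A ∈ Z, P + A ∈ V.map Φ) : finrank K Z ≤ Fintype.card n - 2 := by
    have hlt := Submodule.finrank_lt_finrank_of_lt (Submodule.lt_of_forall_add_mem hmem hne)
    rw [← (Submodule.equivMapOfInjective Φ hΦ V).finrank_eq, hV] at hlt
    omega
  rcases exists_forall_eq_vecMulVec_of_rank_eq_one hK fun A hA => (h A hA).2 with
    ⟨x, hx, hcol⟩ | ⟨y, hy, hrow⟩
  · refine hbound (vecMulVecBilin_injective hx) (finrank_ker_dotProductBilin hx) fun A hA => ?_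
    obtain ⟨y, hxy⟩ := hcol A hA
    exact ⟨y, isNilpotent_vecMulVec_iff.1 (hxy ▸ (h A hA).1), hxy.symm⟩
  · refine hbound (vecMulVecBilin_flip_injective hy) (finrank_ker_dotProductBilin hy)
      fun A hA => ?_
    obtain ⟨x, hxy⟩ := hrow A hA
    exact ⟨x, (dotProduct_comm y x).trans (isNilpotent_vecMulVec_iff.1 (hxy ▸ (h A hA).1)),
      hxy.symm⟩

end

theorem exists_isNilpotent_rank_eq_one_finrank_eq {K : Type*} [Field K] {n : ℕ} (hn : 2 ≤ n) :
    ∃ (Z : Submodule K (Matrix (Fin n) (Fin n) K)) (P : Matrix (Fin n) (Fin n) K),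
      (∀ A ∈ Z, IsNilpotent (P + A) ∧ (P + A).rank = 1) ∧ finrank K Z = n - 2 := by
  set ι : Fin 2 → Fin n := Fin.castLE hn
  have hι : Function.Injective ι := Fin.castLE_injective hn
  set e₀ : Fin n → K := Pi.single (ι 0) 1
  set e₁ : Fin n → K := Pi.single (ι 1) 1
  have he₀ : e₀ ≠ 0 := by simp [e₀]
  have hV : finrank K (LinearMap.ker (LinearMap.funLeft K K ι)) = n - 2 := by
    have hrank := LinearMap.finrank_range_add_finrank_ker (LinearMap.funLeft K K ι)
    rw [LinearMap.range_eq_top.2 (LinearMap.funLeft_surjective_of_injective K K ι hι),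
      finrank_top, Module.finrank_fin_fun, Module.finrank_fin_fun] at hrank
    omega
  refine ⟨(LinearMap.ker (LinearMap.funLeft K K ι)).map (vecMulVecBilin K K e₀),
    vecMulVec e₀ e₁, ?_, ?_⟩
  · rintro _ ⟨w, hw, rfl⟩
    have hw₀ : w (ι 0) = 0 := congrFun hw 0
    have hw₁ : w (ι 1) = 0 := congrFun hw 1
    rw [vecMulVecBilin_apply_apply, ← vecMulVec_add]
    refine ⟨isNilpotent_vecMulVec_iff.2 ?_, rank_vecMulVec_of_ne_zero he₀ fun h0 => ?_⟩
    · simp [e₀, e₁, single_dotProduct, hw₀, hι.ne (show (0 : Fin 2) ≠ 1 by decide)]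
    · simpa [e₁, hw₁] using congrFun h0 (ι 1)
  · rw [← (Submodule.equivMapOfInjective _ (vecMulVecBilin_injective he₀) _).finrank_eq, hV]

end Matrix

/-- The maximal dimension of an affine subspace of nilpotent `n × n` matrices
over a field `K` with at least `3` elements, all of rank exactly `1`, is `n-2`. -/
theorem stmt1 (n : ℕ) (hn : 2 ≤ n) (K : Type*) [Field K]
    (hK : (3 : Cardinal) ≤ Cardinal.mk K) :
    IsGreatest {d : ℕ | ∃ (Z : Submodule K (Matrix (Fin n) (Fin n) K))
        (P : Matrix (Fin n) (Fin n) K),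
        (∀ A ∈ Z, IsNilpotent (P + A) ∧ (P + A).rank = 1) ∧
        d = Module.finrank K Z}
      (n - 2) := by
  refine ⟨?_, ?_⟩
  · obtain ⟨Z, P, h, hZ⟩ := exists_isNilpotent_rank_eq_one_finrank_eq (K := K) hn
    exact ⟨Z, P, h, hZ.symm⟩
  · rintro d ⟨Z, P, h, rfl⟩
    simpa using finrank_le_card_sub_two_of_isNilpotent_rank_eq_one hK h
end

section
/- Let K be a field with |K| ≥ n+1 and let S = P + Z be an affine subspace of M(n×n,K) (Z a linear subspace) such that every element of S is nilpotent. Then every element of the direction Z is nilpotent. -/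
open Polynomial

/-- All coefficients (in the outer variable) of a product of polynomials whose
coefficients have bounded degree, have degree bounded by the sum of the bounds. -/
lemma aux_coeff_prod_natDegree_le {R : Type*} [CommRing R] {ι : Type*}
    (t : Finset ι) (f : ι → R[X][X]) (h : ∀ i ∈ t, ∀ j, ((f i).coeff j).natDegree ≤ 1) :
    ∀ j, ((∏ i ∈ t, f i).coeff j).natDegree ≤ t.card := by
  classical
  induction t using Finset.cons_induction with
  | empty =>
    intro j
    simp only [Finset.prod_empty, Finset.card_empty, Polynomial.coeff_one]
    split <;> simp
  | cons a s ha ih =>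
    intro j
    rw [Finset.prod_cons, Finset.card_cons]
    have hprod := ih (fun i hi j => h i (Finset.mem_cons_of_mem hi) j)
    rw [Polynomial.coeff_mul]
    apply Polynomial.natDegree_sum_le_of_forall_le
    intro p hp
    calc ((f a).coeff p.1 * (∏ i ∈ s, f i).coeff p.2).natDegree
        ≤ ((f a).coeff p.1).natDegree + ((∏ i ∈ s, f i).coeff p.2).natDegree :=
          Polynomial.natDegree_mul_le
      _ ≤ 1 + s.card := add_le_add (h a (Finset.mem_cons_self a s) p.1) (hprod p.2)
      _ = s.card + 1 := add_comm _ _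

/-- Degree bound on the coefficients of the characteristic polynomial of a matrix
whose entries are polynomials of degree at most 1. -/
lemma aux_charpoly_coeff_natDegree_le {K : Type*} [Field K] {n : ℕ}
    (M : Matrix (Fin n) (Fin n) K[X]) (hM : ∀ i j, (M i j).natDegree ≤ 1) (k : ℕ) :
    (M.charpoly.coeff k).natDegree ≤ n := by
  classical
  have hent : ∀ (i j : Fin n) (l : ℕ), (((Matrix.charmatrix M) i j).coeff l).natDegree ≤ 1 := by
    intro i j l
    rcases eq_or_ne i j with rfl | hij
    · rw [Matrix.charmatrix_apply_eq, Polynomial.coeff_sub]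
      apply le_trans (Polynomial.natDegree_sub_le _ _)
      rw [Polynomial.coeff_C]
      have h1 : ((X : K[X][X]).coeff l).natDegree ≤ 1 := by
        rw [Polynomial.coeff_X]
        split <;> simp
      have h2 : (if l = 0 then M i i else 0).natDegree ≤ 1 := by
        split
        · exact hM i i
        · simp
      exact max_le h1 h2
    · rw [Matrix.charmatrix_apply_ne _ _ _ hij, Polynomial.coeff_neg, Polynomial.natDegree_neg,
        Polynomial.coeff_C]
      split
      · exact hM i j
      · simp
  rw [Matrix.charpoly, Matrix.det_apply]
  rw [Polynomial.finset_sum_coeff]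
  apply Polynomial.natDegree_sum_le_of_forall_le
  intro σ _
  have := aux_coeff_prod_natDegree_le Finset.univ
    (fun i => (Matrix.charmatrix M) (σ i) i) (fun i _ l => hent (σ i) i l) k
  calc ((Equiv.Perm.sign σ • ∏ i, (Matrix.charmatrix M) (σ i) i).coeff k).natDegree
      = ((Equiv.Perm.sign σ : ℤ) • (∏ i, (Matrix.charmatrix M) (σ i) i).coeff k).natDegree := by
        rw [Polynomial.coeff_smul]; norm_cast
    _ ≤ ((∏ i, (Matrix.charmatrix M) (σ i) i).coeff k).natDegree := by
        rcases Int.units_eq_one_or (Equiv.Perm.sign σ) with h | h <;> rw [h] <;> simp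
    _ ≤ n := by simpa using this

/-- A nilpotent matrix over a field has characteristic polynomial `X ^ n`. -/
lemma aux_charpoly_of_nilpotent {K : Type*} [Field K] {n : ℕ}
    (M : Matrix (Fin n) (Fin n) K) (hM : IsNilpotent M) :
    M.charpoly = X ^ n := by
  have h := Matrix.isNilpotent_charpoly_sub_pow_of_isNilpotent hM
  rw [← sub_eq_zero]
  simpa [Fintype.card_fin] using h.eq_zero

/-- If every element of an affine subspace `P + Z` of `n × n` matrices over a field `K`
with `|K| ≥ n+1` is nilpotent, then every element of the direction `Z` is nilpotent. -/
theorem stmt4 (n : ℕ) (hn : 1 ≤ n) (K : Type*) [Field K]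
    (hK : (n + 1 : Cardinal) ≤ Cardinal.mk K)
    (Z : Submodule K (Matrix (Fin n) (Fin n) K)) (P : Matrix (Fin n) (Fin n) K)
    (hS : ∀ A ∈ Z, IsNilpotent (P + A)) :
    ∀ A ∈ Z, IsNilpotent A := by
  intro A hA
  classical
  -- The matrix `P + s • A` over `K[s]`
  set M : Matrix (Fin n) (Fin n) K[X] :=
    P.map C + (X : K[X]) • A.map C with hMdef
  have hMentry : ∀ i j, M i j = C (P i j) + X * C (A i j) := by
    intro i j
    simp [hMdef, Matrix.add_apply, Matrix.smul_apply, Matrix.map_apply, smul_eq_mul]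
  have hMdeg : ∀ i j, (M i j).natDegree ≤ 1 := by
    intro i j
    rw [hMentry]
    apply le_trans (Polynomial.natDegree_add_le _ _)
    simp only [Polynomial.natDegree_C, max_le_iff]
    constructor
    · exact Nat.zero_le 1
    · apply le_trans (Polynomial.natDegree_mul_le)
      simp
  -- Specialization at `u : K`
  have hmap : ∀ u : K, M.map (Polynomial.evalRingHom u) = P + u • A := by
    intro u
    ext i j
    rw [Matrix.map_apply, hMentry]
    simp only [map_add, map_mul, coe_evalRingHom, eval_C, eval_X, Matrix.add_apply,
      Matrix.smul_apply, smul_eq_mul]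
  have hcharspec : ∀ u : K, (P + u • A).charpoly = X ^ n := by
    intro u
    exact aux_charpoly_of_nilpotent _ (hS (u • A) (Z.smul_mem u hA))
  -- Each lower coefficient of the charpoly of `M` vanishes
  have hcoeff : ∀ k, k < n → M.charpoly.coeff k = 0 := by
    intro k hk
    apply Polynomial.eq_zero_of_forall_eval_zero_of_natDegree_lt_card
    · intro u
      have h1 : (M.map (Polynomial.evalRingHom u)).charpoly
          = M.charpoly.map (Polynomial.evalRingHom u) :=
        Matrix.charpoly_map M (Polynomial.evalRingHom u)
      rw [hmap u, hcharspec u] at h1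
      have h2 := congrArg (fun p => Polynomial.coeff p k) h1
      simp only [Polynomial.coeff_map, Polynomial.coeff_X_pow, coe_evalRingHom] at h2
      rw [if_neg hk.ne] at h2
      exact h2.symm
    · calc ((M.charpoly.coeff k).natDegree : Cardinal)
          ≤ (n : Cardinal) := by
            exact_mod_cast aux_charpoly_coeff_natDegree_le M hMdeg k
        _ < (n + 1 : Cardinal) := by exact_mod_cast Nat.lt_succ_self n
        _ ≤ Cardinal.mk K := by exact_mod_cast hK
  -- Hence the charpoly of `M` is `X ^ n`
  have hcharM : M.charpoly = X ^ n := by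
    have hmon : M.charpoly.Monic := Matrix.charpoly_monic M
    have hdeg : M.charpoly.natDegree = n := by
      rw [Matrix.charpoly_natDegree_eq_dim, Fintype.card_fin]
    refine Polynomial.ext fun k => ?_
    rcases lt_trichotomy k n with hk | rfl | hk
    · rw [hcoeff k hk, Polynomial.coeff_X_pow, if_neg hk.ne]
    · rw [Polynomial.coeff_X_pow, if_pos rfl]
      have h := hmon.coeff_natDegree
      rwa [hdeg] at h
    · rw [Polynomial.coeff_X_pow, if_neg hk.ne',
        Polynomial.coeff_eq_zero_of_natDegree_lt (by rw [hdeg]; exact hk)]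
  -- Cayley–Hamilton: `M ^ n = 0`
  have hMn : M ^ n = 0 := by
    have := Matrix.aeval_self_charpoly M
    rwa [hcharM, map_pow, Polynomial.aeval_X] at this
  -- Transfer through `matPolyEquiv` and extract the top coefficient
  set q : (Matrix (Fin n) (Fin n) K)[X] := matPolyEquiv M with hq
  have hqn : q ^ n = 0 := by
    rw [hq, ← map_pow, hMn, map_zero]
  have hqdeg : q.natDegree ≤ 1 := by
    rw [Polynomial.natDegree_le_iff_coeff_eq_zero]
    intro k hk
    ext i j
    rw [hq, matPolyEquiv_coeff_apply]
    exact Polynomial.coeff_eq_zero_of_natDegree_lt (lt_of_le_of_lt (hMdeg i j) hk)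
  have hq1 : q.coeff 1 = A := by
    ext i j
    rw [hq, matPolyEquiv_coeff_apply, hMentry]
    simp
  have : (q ^ n).coeff (n * 1) = (q.coeff 1) ^ n :=
    Polynomial.coeff_pow_of_natDegree_le hqdeg
  rw [hqn, hq1, mul_one] at this
  exact ⟨n, by simpa using this.symm⟩
end

section
/- Let K be a field with |K| ≥ n+1, J the n×n nilpotent Jordan block with ones on the superdiagonal, and Z a linear subspace of M(n×n,K) such that every element of J + Z is nilpotent. Then every A in Z satisfies A_{n,1} = 0. -/
/-! For every `t`, `J + t • A` is nilpotent, so the polynomial `det (J + X • A)`, of degree at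
most `n`, has `|K| ≥ n + 1` roots and vanishes. Its linear coefficient is the sum over `j` of
`det J` with column `j` replaced by that of `A`; the first column of `J` is zero, so only `j = 1`
contributes, and that determinant is `±A_{n,1}`. -/

open Polynomial Matrix Finset

namespace Polynomial

theorem coeff_prod_X_mul_C_add_C_one {ι R : Type*} [CommRing R] [DecidableEq ι] (s : Finset ι)
    (a b : ι → R) :
    (∏ i ∈ s, (X * C (b i) + C (a i))).coeff 1 = ∑ i ∈ s, b i * ∏ j ∈ s.erase i, a j := by
  have h := coeff_derivative (∏ i ∈ s, (X * C (b i) + C (a i))) 0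
  rw [derivative_prod_finset, coeff_zero_eq_eval_zero] at h
  simp only [zero_add, Nat.cast_zero, mul_one] at h
  rw [← h, eval_finsetSum]
  refine Finset.sum_congr rfl fun i _ => ?_
  simp only [eval_mul, eval_prod, derivative_add, derivative_mul, derivative_X, derivative_C,
    eval_add, eval_C, eval_X, zero_mul, mul_zero, zero_add, one_mul, add_zero, mul_comm]

theorem coeff_det_X_add_C_one {n R : Type*} [DecidableEq n] [Fintype n] [CommRing R]
    (A B : Matrix n n R) :
    (det ((X : R[X]) • A.map C + B.map C)).coeff 1 =
      ∑ j, det (B.updateCol j fun i => A i j) := by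
  simp only [det_apply, finsetSum_coeff, Units.smul_def, coeff_smul]
  rw [Finset.sum_comm]
  refine Finset.sum_congr rfl fun σ _ => ?_
  simp only [Matrix.add_apply, Matrix.smul_apply, map_apply, smul_eq_mul,
    coeff_prod_X_mul_C_add_C_one, ← Finset.smul_sum]
  congr 1
  refine Finset.sum_congr rfl fun j _ => ?_
  rw [← Finset.mul_prod_erase _ _ (Finset.mem_univ j)]
  simp only [updateCol_self]
  congr 1
  refine Finset.prod_congr rfl fun k hk => ?_
  rw [updateCol_ne (Finset.ne_of_mem_erase hk)]

theorem eval_det_X_smul_add_C {n R : Type*} [DecidableEq n] [Fintype n] [CommRing R]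
    (A B : Matrix n n R) (t : R) :
    (det ((X : R[X]) • A.map C + B.map C)).eval t = det (B + t • A) := by
  rw [← coe_evalRingHom, RingHom.map_det]
  congr 1
  ext i j
  simp only [RingHom.mapMatrix_apply, coe_evalRingHom, map_apply, Matrix.add_apply,
    Matrix.smul_apply, smul_eq_mul, X_mul_C, eval_add, eval_mul, eval_C, eval_X]
  ring

end Polynomial

theorem Matrix.det_eq_zero_of_isNilpotent {n R : Type*} [DecidableEq n] [Fintype n] [Nonempty n]
    [CommRing R] [IsReduced R] {M : Matrix n n R} (hM : IsNilpotent M) : det M = 0 := by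
  obtain ⟨k, hk⟩ := hM
  exact IsNilpotent.eq_zero ⟨k, by rw [← det_pow, hk, det_zero]⟩

def shiftMatrix (R : Type*) [Zero R] [One R] (n : ℕ) : Matrix (Fin n) (Fin n) R :=
  Matrix.of fun i j => if (i : ℕ) + 1 = j then 1 else 0

section

variable {R : Type*} [CommRing R] {m : ℕ}

theorem det_updateCol_shiftMatrix_of_ne_zero {j : Fin (m + 1)} (hj : j ≠ 0)
    (c : Fin (m + 1) → R) :
    det ((shiftMatrix R (m + 1)).updateCol j c) = 0 :=
  det_eq_zero_of_column_eq_zero 0 fun i => by simp [updateCol_ne hj.symm, shiftMatrix]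

theorem det_updateCol_zero_shiftMatrix (c : Fin (m + 1) → R) :
    det ((shiftMatrix R (m + 1)).updateCol 0 c) = (-1) ^ m * c (Fin.last m) := by
  rw [det_succ_row _ (Fin.last m), Finset.sum_eq_single 0]
  · have : ((shiftMatrix R (m + 1)).updateCol 0 c).submatrix Fin.castSucc Fin.succ = 1 := by
      ext i j
      simp [shiftMatrix, one_apply, Fin.ext_iff]
    simp [this]
  · intro j _ hj
    simp [updateCol_ne hj, shiftMatrix, j.isLt.ne']
  · simp

theorem coeff_det_X_smul_add_shiftMatrix_one (A : Matrix (Fin (m + 1)) (Fin (m + 1)) R) :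
    (det ((X : R[X]) • A.map C + (shiftMatrix R (m + 1)).map C)).coeff 1 =
      (-1) ^ m * A (Fin.last m) 0 := by
  rw [coeff_det_X_add_C_one, Finset.sum_eq_single 0 (fun j _ hj ↦
    det_updateCol_shiftMatrix_of_ne_zero hj _) (by simp), det_updateCol_zero_shiftMatrix]

end

/-- If every element of `J + Z` is nilpotent, where `J` is the nilpotent Jordan block and
`|K| ≥ n+1`, then every `A ∈ Z` satisfies `A_{n,1} = 0`. -/
theorem stmt5 (n : ℕ) (hn : 1 ≤ n) (K : Type*) [Field K]
    (hK : (n + 1 : Cardinal) ≤ Cardinal.mk K)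
    (Z : Submodule K (Matrix (Fin n) (Fin n) K))
    (J : Matrix (Fin n) (Fin n) K)
    (hJ : J = Matrix.of fun (i j : Fin n) => if (i : ℕ) + 1 = (j : ℕ) then 1 else 0)
    (hS : ∀ A ∈ Z, IsNilpotent (J + A)) :
    ∀ A ∈ Z, A ⟨n - 1, by omega⟩ ⟨0, by omega⟩ = 0 := by
  intro A hA
  obtain ⟨m, rfl⟩ : ∃ m, n = m + 1 := ⟨n - 1, by omega⟩
  show A (Fin.last m) 0 = 0
  change J = shiftMatrix K (m + 1) at hJ
  subst hJ
  have hdet : det ((X : K[X]) • A.map C + (shiftMatrix K (m + 1)).map C) = 0 := by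
    refine eq_zero_of_forall_eval_zero_of_natDegree_lt_card _ (fun t ↦ ?_) ?_
    · rw [eval_det_X_smul_add_C]
      exact det_eq_zero_of_isNilpotent (hS _ (Z.smul_mem t hA))
    · have hdeg := (natDegree_det_X_add_C_le A (shiftMatrix K (m + 1))).trans_eq
        (Fintype.card_fin _)
      refine lt_of_lt_of_le ?_ hK
      exact_mod_cast Nat.lt_succ_of_le hdeg
  have hcoeff := coeff_det_X_smul_add_shiftMatrix_one A
  rw [hdet, coeff_zero] at hcoeff
  simpa using hcoeff.symm
end

section
/- Let L be a linear subspace of nilpotent matrices over a field K of characteristic 0. If A, B ∈ L and m ≥ 1, then tr(A^m B) = 0. -/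
open Polynomial Matrix Finset

private lemma sum_step {n : ℕ} {K : Type*} [Field K]
    (A B : Matrix (Fin n) (Fin n) K) (k : ℕ) :
    (∑ i ∈ Finset.range (k+1), A^i * B * A^(k-i))
      = (∑ i ∈ Finset.range k, A^i * B * A^(k-1-i)) * A + A^k * B := by
  rw [Finset.sum_range_succ, Nat.sub_self, pow_zero, mul_one, Finset.sum_mul]
  congr 1
  refine Finset.sum_congr rfl fun i hi => ?_
  rw [Finset.mem_range] at hi
  rw [show k - i = (k-1-i)+1 by omega, pow_succ, ← mul_assoc]

private lemma expand_aux {n : ℕ} {K : Type*} [Field K]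
    (A B : Matrix (Fin n) (Fin n) K) (k : ℕ) :
    ∃ N : Matrix (Fin n) (Fin n) K[X],
      (A.map C + (X : K[X]) • B.map C)^k
        = (A^k).map C
          + (X : K[X]) • (∑ i ∈ Finset.range k, A^i * B * A^(k-1-i)).map C
          + (X : K[X])^2 • N := by
  induction k with
  | zero =>
      refine ⟨0, ?_⟩
      simp [Matrix.map_one]
  | succ k ih =>
      obtain ⟨N, hN⟩ := ih
      refine ⟨N * A.map C + (∑ i ∈ Finset.range k, A^i * B * A^(k-1-i)).map C * B.map C
        + (X : K[X]) • (N * B.map C), ?_⟩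
      have hS : (∑ i ∈ Finset.range (k+1), A^i * B * A^(k+1-1-i)).map C
          = (∑ i ∈ Finset.range k, A^i * B * A^(k-1-i)).map C * A.map C
            + (A^k).map C * B.map C := by
        have := sum_step A B k
        simp only [Nat.add_sub_cancel] at *
        rw [this]
        simp [Matrix.map_add, Matrix.map_mul]
      rw [pow_succ, hN, hS]
      set A' := A.map C
      set B' := B.map C
      set S' := (∑ i ∈ Finset.range k, A^i * B * A^(k-1-i)).map C
      have hAp : (A^(k+1)).map C = (A^k).map C * A' := by
        rw [pow_succ, Matrix.map_mul]
      rw [hAp]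
      simp only [add_mul, mul_add, Matrix.smul_mul, Matrix.mul_smul, smul_add, smul_smul]
      ring_nf
      module

/-- Mathes–Omladič–Radjavi: if `L` is a linear subspace of nilpotent matrices over a field
of characteristic zero, `A, B ∈ L` and `m ≥ 1`, then `tr(A^m B) = 0`. -/
theorem stmt7 (n m : ℕ) (hm : 1 ≤ m) (K : Type*) [Field K] [CharZero K]
    (L : Submodule K (Matrix (Fin n) (Fin n) K))
    (hL : ∀ M ∈ L, IsNilpotent M)
    (A B : Matrix (Fin n) (Fin n) K) (hA : A ∈ L) (hB : B ∈ L) :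
    Matrix.trace (A ^ m * B) = 0 := by
  set M : Matrix (Fin n) (Fin n) K[X] := A.map C + (X : K[X]) • B.map C with hM
  set p : K[X] := Matrix.trace (M ^ (m+1)) with hp
  -- p vanishes at every t : K
  have heval : ∀ t : K, p.eval t = 0 := by
    intro t
    have hmem : A + t • B ∈ L := L.add_mem hA (L.smul_mem t hB)
    have hnil : IsNilpotent ((A + t • B) ^ (m+1)) := by
      obtain ⟨r, hr⟩ := hL _ hmem
      exact ⟨r, by rw [← pow_mul, Nat.mul_comm, pow_mul, hr, zero_pow (by positivity)]⟩
    have htr : Matrix.trace ((A + t • B) ^ (m+1)) = 0 :=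
      (Matrix.isNilpotent_trace_of_isNilpotent hnil).eq_zero
    have hmap : M.map (Polynomial.eval t) = A + t • B := by
      ext i j
      simp [hM, Matrix.map_apply, Matrix.add_apply, Matrix.smul_apply, smul_eq_mul]
      ring
    have hpowmap : (M ^ (m+1)).map (Polynomial.eval t)
        = (M.map (Polynomial.eval t)) ^ (m+1) := by
      have := map_pow ((Polynomial.evalRingHom t).mapMatrix) M (m+1)
      simpa [RingHom.mapMatrix_apply] using this
    have : p.eval t = Matrix.trace ((M ^ (m+1)).map (Polynomial.eval t)) := by
      simp [hp, Matrix.trace, Matrix.diag, Polynomial.eval_finset_sum, Matrix.map_apply]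
    rw [this, hpowmap, hmap, htr]
  have hp0 : p = 0 := Polynomial.funext fun t => by rw [heval t, Polynomial.eval_zero]
  -- compute coefficient 1 of p
  obtain ⟨N, hN⟩ := expand_aux A B (m+1)
  have htrmap : ∀ (C' : Matrix (Fin n) (Fin n) K),
      Matrix.trace (C'.map (C : K →+* K[X])) = C (Matrix.trace C') := by
    intro C'
    simp [Matrix.trace, Matrix.diag, Matrix.map_apply, map_sum]
  have hptr : p = C (Matrix.trace (A^(m+1)))
      + X * C (Matrix.trace (∑ i ∈ Finset.range (m+1), A^i * B * A^(m+1-1-i)))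
      + X^2 * Matrix.trace N := by
    rw [hp, hN, Matrix.trace_add, Matrix.trace_add, Matrix.trace_smul, Matrix.trace_smul,
      htrmap, htrmap, smul_eq_mul, smul_eq_mul]
  have hcoeff : Matrix.trace (∑ i ∈ Finset.range (m+1), A^i * B * A^(m+1-1-i)) = 0 := by
    have := congrArg (fun q => Polynomial.coeff q 1) hp0
    rw [hptr] at this
    simpa [Polynomial.coeff_add, Polynomial.coeff_C, Polynomial.coeff_X_mul,
      Polynomial.coeff_C, pow_two, mul_assoc, Polynomial.coeff_X_mul,
      Polynomial.mul_coeff_zero] using this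
  -- each term of the sum has trace tr(A^m B)
  have hterm : ∀ i ∈ Finset.range (m+1),
      Matrix.trace (A^i * B * A^(m+1-1-i)) = Matrix.trace (A^m * B) := by
    intro i hi
    rw [Finset.mem_range] at hi
    rw [Matrix.trace_mul_comm, ← mul_assoc, ← pow_add, show m+1-1-i + i = m by omega]
  rw [Matrix.trace_sum, Finset.sum_congr rfl hterm, Finset.sum_const, Finset.card_range] at hcoeff
  have hne : ((m+1 : ℕ) : K) ≠ 0 := Nat.cast_ne_zero.mpr (Nat.succ_ne_zero m)
  have := hcoeff
  rw [nsmul_eq_mul] at this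
  exact (mul_eq_zero.mp this).resolve_left (by exact_mod_cast hne)
end

section
/- Let A ∈ M(n×n,K) and C = I + Σ_{i=1}^{n-1} c_i J^i for some c_i ∈ K. Let i,j ∈ {1,…,n}. If A_{a,b} = 0 for all (a,b) ∈ {i,…,n} × {1,…,j} except possibly (a,b) = (i,j), then (C⁻¹ A C)_{i,j} = A_{i,j}. -/
open Finset Matrix

section aux
variable {n : ℕ} {K : Type*} [Field K]

/-- strictly upper triangular -/
def StmtSU (M : Matrix (Fin n) (Fin n) K) : Prop :=
  ∀ a b : Fin n, (b : ℕ) ≤ (a : ℕ) → M a b = 0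

lemma stmtSU_mul {M N : Matrix (Fin n) (Fin n) K} (hM : StmtSU M) (hN : StmtSU N) :
    StmtSU (M * N) := by
  intro a b hba
  rw [Matrix.mul_apply]
  refine Finset.sum_eq_zero fun x _ => ?_
  rcases le_or_gt (x : ℕ) (a : ℕ) with h | h
  · rw [hM a x h, zero_mul]
  · rw [hN x b (hba.trans h.le), mul_zero]

lemma stmtSU_pow_succ {M : Matrix (Fin n) (Fin n) K} (hM : StmtSU M) (k : ℕ) :
    StmtSU (M ^ (k + 1)) := by
  induction k with
  | zero => simpa using hM
  | succ m ih => rw [pow_succ]; exact stmtSU_mul ih hM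

lemma stmtSU_pow_zero {M : Matrix (Fin n) (Fin n) K} (hM : StmtSU M) :
    ∀ (m : ℕ) (a b : Fin n), (b : ℕ) < (a : ℕ) + m → (M ^ m) a b = 0 := by
  intro m
  induction m with
  | zero =>
    intro a b h
    rw [pow_zero, Matrix.one_apply_ne]
    intro hab; subst hab; omega
  | succ m ih =>
    intro a b h
    rw [pow_succ, Matrix.mul_apply]
    refine Finset.sum_eq_zero fun x _ => ?_
    rcases le_or_gt (b : ℕ) (x : ℕ) with hx | hx
    · rw [hM x b hx, mul_zero]
    · rw [ih a x (by omega), zero_mul]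

lemma stmtSU_pow_eq_zero {M : Matrix (Fin n) (Fin n) K} (hM : StmtSU M) : M ^ n = 0 := by
  ext a b
  rw [stmtSU_pow_zero hM n a b (by omega)]
  rfl

lemma stmtSU_neg {M : Matrix (Fin n) (Fin n) K} (hM : StmtSU M) : StmtSU (-M) := by
  intro a b h
  simp [hM a b h]

end aux

/-- If `A_{a,b} = 0` for all `(a,b) ∈ {i,…,n} × {1,…,j}` except possibly `(i,j)`, then
`(C⁻¹ A C)_{i,j} = A_{i,j}` for `C = I + Σ cᵢ Jⁱ`. -/
theorem stmt10 (n : ℕ) (K : Type*) [Field K]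
    (J : Matrix (Fin n) (Fin n) K)
    (hJ : J = Matrix.of fun (i j : Fin n) => if (i : ℕ) + 1 = (j : ℕ) then 1 else 0)
    (c : ℕ → K) (A : Matrix (Fin n) (Fin n) K) (i j : Fin n)
    (hA : ∀ a b : Fin n, i ≤ a → b ≤ j → (a, b) ≠ (i, j) → A a b = 0) :
    ((1 + ∑ k ∈ Finset.Icc 1 (n - 1), c k • J ^ k)⁻¹ * A *
      (1 + ∑ k ∈ Finset.Icc 1 (n - 1), c k • J ^ k)) i j = A i j := by
  set S : Matrix (Fin n) (Fin n) K := ∑ k ∈ Finset.Icc 1 (n - 1), c k • J ^ k with hS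
  have hJsu : StmtSU J := by
    intro a b h
    rw [hJ]
    simp only [Matrix.of_apply]
    rw [if_neg (by omega)]
  have hSsu : StmtSU S := by
    intro a b h
    rw [hS]
    simp only [Matrix.sum_apply, Matrix.smul_apply, smul_eq_mul]
    refine Finset.sum_eq_zero fun k hk => ?_
    simp only [Finset.mem_Icc] at hk
    obtain ⟨k, rfl⟩ : ∃ m, k = m + 1 := ⟨k - 1, by omega⟩
    rw [stmtSU_pow_succ hJsu _ a b h, mul_zero]
  set B : Matrix (Fin n) (Fin n) K := ∑ m ∈ Finset.range n, (-S) ^ m with hB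
  have hnegsu : StmtSU (-S) := stmtSU_neg hSsu
  have hBC : B * (1 + S) = 1 := by
    have h2 := geom_sum_mul (-S) n
    rw [stmtSU_pow_eq_zero hnegsu] at h2
    have e : (-S - 1 : Matrix (Fin n) (Fin n) K) = -(1 + S) := by abel
    rw [e, mul_neg, zero_sub] at h2
    have := neg_injective h2
    exact this
  rw [show (1 + S)⁻¹ = B from Matrix.inv_eq_left_inv hBC]
  -- entry facts
  have hBlow : ∀ a b : Fin n, (b : ℕ) < (a : ℕ) → B a b = 0 := by
    intro a b h
    rw [hB]
    simp only [Matrix.sum_apply]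
    refine Finset.sum_eq_zero fun m _ => ?_
    match m with
    | 0 => rw [pow_zero, Matrix.one_apply_ne (by intro hab; subst hab; omega)]
    | m + 1 => exact stmtSU_pow_succ hnegsu m a b h.le
  have hBdiag : ∀ a : Fin n, B a a = 1 := by
    intro a
    rw [hB]
    simp only [Matrix.sum_apply]
    rw [Finset.sum_eq_single 0]
    · simp
    · intro m _ hm
      obtain ⟨m, rfl⟩ : ∃ k, m = k + 1 := ⟨m - 1, by omega⟩
      exact stmtSU_pow_succ hnegsu m a a le_rfl
    · intro h
      exact absurd (Finset.mem_range.mpr a.pos) h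
  have hClow : ∀ a b : Fin n, (b : ℕ) < (a : ℕ) → (1 + S) a b = 0 := by
    intro a b h
    simp only [Matrix.add_apply]
    rw [Matrix.one_apply_ne (by intro hab; subst hab; omega), hSsu a b h.le, add_zero]
  have hCdiag : ∀ a : Fin n, (1 + S) a a = 1 := by
    intro a
    simp only [Matrix.add_apply, Matrix.one_apply_eq, hSsu a a le_rfl, add_zero]
  -- final computation
  simp only [Matrix.mul_apply, Finset.sum_mul]
  rw [Finset.sum_eq_single j]
  · rw [Finset.sum_eq_single i]
    · rw [hBdiag, hCdiag, one_mul, mul_one]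
    · intro y _ hy
      rcases lt_or_ge (y : ℕ) (i : ℕ) with h | h
      · rw [hBlow i y h, zero_mul, zero_mul]
      · rw [hA y j (by rwa [Fin.le_def]) le_rfl (by simp [hy]), mul_zero, zero_mul]
    · intro h; exact absurd (Finset.mem_univ i) h
  · intro x _ hx
    refine Finset.sum_eq_zero fun y _ => ?_
    rcases lt_or_ge (j : ℕ) (x : ℕ) with h | h
    · rw [hClow x j h, mul_zero]
    · rcases lt_or_ge (y : ℕ) (i : ℕ) with h2 | h2
      · rw [hBlow i y h2, zero_mul, zero_mul]
      · rw [hA y x (by rwa [Fin.le_def]) (by rwa [Fin.le_def]) (by simp [hx]), mul_zero, zero_mul]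
  · intro h; exact absurd (Finset.mem_univ j) h
end

section
/- Let A ∈ M(n×n,K) and l ∈ {2,…,n}. If A_{l,1} ≠ 0 and A_{i,1} = 0 for all i ∈ {l+1,…,n}, then there exist c_1,…,c_{n-1} ∈ K such that, setting C = I + Σ_{i=1}^{n-1} c_i J^i, one has (C A C⁻¹)_{i,1} = 0 for all i ∈ {1,…,l-1} (while (C A C⁻¹)_{l,1} = A_{l,1}). -/
noncomputable def cseq {K : Type*} [Field K] (v : ℕ → K) (l : ℕ) : ℕ → K
  | k =>
    if 1 ≤ k ∧ k ≤ l - 1 then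
      -(v (l - 1 - k) + ∑ j ∈ (Finset.Ico 1 k).attach, cseq v l j.1 * v (l - 1 - k + j.1)) / v (l - 1)
    else 0
  decreasing_by exact (Finset.mem_Ico.mp j.2).2

lemma cseq_eq {K : Type*} [Field K] (v : ℕ → K) (l k : ℕ) :
    cseq v l k = if 1 ≤ k ∧ k ≤ l - 1 then
      -(v (l - 1 - k) + ∑ j ∈ Finset.Ico 1 k, cseq v l j * v (l - 1 - k + j)) / v (l - 1)
    else 0 := by
  rw [cseq]
  split
  · rw [Finset.sum_attach (Finset.Ico 1 k) (fun m => cseq v l m * v (l - 1 - k + m))]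
  · rfl

lemma cseq_spec {K : Type*} [Field K] (v : ℕ → K) (l k : ℕ) (hv : v (l - 1) ≠ 0)
    (h1 : 1 ≤ k) (h2 : k ≤ l - 1) :
    v (l - 1 - k) + ∑ j ∈ Finset.Ico 1 k, cseq v l j * v (l - 1 - k + j)
      + cseq v l k * v (l - 1) = 0 := by
  rw [cseq_eq v l k, if_pos ⟨h1, h2⟩, div_mul_cancel₀ _ hv]
  ring

lemma key1 {K : Type*} [Field K] (v : ℕ → K) (n l : ℕ) (hl2 : 2 ≤ l) (hln : l ≤ n)
    (hv : v (l - 1) ≠ 0) (hv0 : ∀ m, l ≤ m → v m = 0) (i : ℕ) (hi : i + 1 < l) :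
    v i + ∑ k ∈ Finset.Icc 1 (n - 1), cseq v l k * v (i + k) = 0 := by
  set c := cseq v l with hc
  set k0 := l - 1 - i with hk0
  have h1 : 1 ≤ k0 := by omega
  have h2 : k0 ≤ l - 1 := by omega
  have h3 : k0 ≤ n - 1 := by omega
  have hsub : ∑ k ∈ Finset.Icc 1 (n - 1), c k * v (i + k)
      = ∑ k ∈ Finset.Icc 1 k0, c k * v (i + k) := by
    refine (Finset.sum_subset (Finset.Icc_subset_Icc_right h3) ?_).symm
    intro k hk hk'
    simp only [Finset.mem_Icc] at hk hk'
    have : l ≤ i + k := by omega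
    rw [hv0 _ this, mul_zero]
  rw [hsub, ← Finset.Ico_add_one_right_eq_Icc, Finset.sum_Ico_succ_top (by omega)]
  have hs := cseq_spec v l k0 hv h1 h2
  rw [show l - 1 - k0 = i by omega] at hs
  rw [show l - 1 = i + k0 by omega] at hs
  linear_combination hs

lemma key2 {K : Type*} [Field K] (v : ℕ → K) (n l : ℕ) (hl2 : 2 ≤ l)
    (hv0 : ∀ m, l ≤ m → v m = 0) :
    v (l - 1) + ∑ k ∈ Finset.Icc 1 (n - 1), cseq v l k * v (l - 1 + k) = v (l - 1) := by
  rw [Finset.sum_eq_zero, add_zero]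
  intro k hk
  simp only [Finset.mem_Icc] at hk
  rw [hv0 _ (by omega), mul_zero]

lemma Jpow {n : ℕ} {K : Type*} [Field K] (k : ℕ) :
    (Matrix.of fun (i j : Fin n) => if (i : ℕ) + 1 = (j : ℕ) then (1:K) else 0) ^ k
      = Matrix.of fun (i j : Fin n) => if (i : ℕ) + k = (j : ℕ) then 1 else 0 := by
  induction k with
  | zero =>
    ext i j
    simp [Matrix.one_apply, Fin.ext_iff]
  | succ k ih =>
    ext i j
    rw [pow_succ, Matrix.mul_apply]
    simp only [ih, Matrix.of_apply]
    by_cases h : (i : ℕ) + k < n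
    · rw [Finset.sum_eq_single (⟨(i : ℕ) + k, h⟩ : Fin n)]
      · simp [show (i : ℕ) + k + 1 = (i:ℕ) + (k+1) by omega]
      · intro m _ hm
        rw [if_neg (by simp [Fin.ext_iff] at hm ⊢; omega), zero_mul]
      · intro hm; exact absurd (Finset.mem_univ _) hm
    · rw [Finset.sum_eq_zero]
      · rw [if_neg (by omega)]
      · intro m _
        rw [if_neg (by omega), zero_mul]

/-- If `A_{l,1} ≠ 0` and `A_{i,1} = 0` for all `i ∈ {l+1,…,n}` (1-based indices), then
there are `c₁, …, c_{n-1}` such that, with `C = I + Σ cᵢ Jⁱ`, the matrix `C A C⁻¹` has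
`(C A C⁻¹)_{i,1} = 0` for all `i < l`, while `(C A C⁻¹)_{l,1} = A_{l,1}`. -/
theorem stmt11 (n : ℕ) (K : Type*) [Field K]
    (J : Matrix (Fin n) (Fin n) K)
    (hJ : J = Matrix.of fun (i j : Fin n) => if (i : ℕ) + 1 = (j : ℕ) then 1 else 0)
    (A : Matrix (Fin n) (Fin n) K) (l : ℕ) (hl2 : 2 ≤ l) (hln : l ≤ n)
    (hAl : A ⟨l - 1, by omega⟩ ⟨0, by omega⟩ ≠ 0)
    (hA0 : ∀ i : Fin n, l ≤ (i : ℕ) → A i ⟨0, by omega⟩ = 0) :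
    ∃ c : ℕ → K,
      (∀ i : Fin n, (i : ℕ) + 1 < l →
        ((1 + ∑ k ∈ Finset.Icc 1 (n - 1), c k • J ^ k) * A *
          (1 + ∑ k ∈ Finset.Icc 1 (n - 1), c k • J ^ k)⁻¹) i ⟨0, by omega⟩ = 0) ∧
      ((1 + ∑ k ∈ Finset.Icc 1 (n - 1), c k • J ^ k) * A *
          (1 + ∑ k ∈ Finset.Icc 1 (n - 1), c k • J ^ k)⁻¹) ⟨l - 1, by omega⟩ ⟨0, by omega⟩ =
        A ⟨l - 1, by omega⟩ ⟨0, by omega⟩ := by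
  have hn : 0 < n := by omega
  set z : Fin n := ⟨0, hn⟩ with hz
  set v : ℕ → K := fun m => if h : m < n then A ⟨m, h⟩ z else 0 with hv
  have hvl : v (l - 1) ≠ 0 := by
    simp only [hv]
    rw [dif_pos (show l - 1 < n by omega)]
    exact hAl
  have hv0 : ∀ m, l ≤ m → v m = 0 := by
    intro m hm
    simp only [hv]
    split
    · exact hA0 ⟨m, by omega⟩ hm
    · rfl
  set c : ℕ → K := cseq v l with hc
  refine ⟨c, ?_⟩
  set S : Matrix (Fin n) (Fin n) K := ∑ k ∈ Finset.Icc 1 (n - 1), c k • J ^ k with hS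
  -- entries of powers of J
  have hJp : ∀ (k : ℕ) (i j : Fin n),
      (J ^ k) i j = if (i : ℕ) + k = (j : ℕ) then 1 else 0 := by
    intro k i j
    rw [hJ, Jpow k]
    rfl
  -- J^n = 0
  have hJn : J ^ n = 0 := by
    ext i j
    rw [hJp, if_neg (by omega)]
    rfl
  -- S = J * B
  have hSB : ∃ B : Matrix (Fin n) (Fin n) K, S = J * B ∧ Commute J B := by
    refine ⟨∑ k ∈ Finset.Icc 1 (n - 1), c k • J ^ (k - 1), ?_, ?_⟩
    · rw [hS, Finset.mul_sum]
      refine Finset.sum_congr rfl ?_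
      intro k hk
      simp only [Finset.mem_Icc] at hk
      rw [Matrix.mul_smul, ← pow_succ']
      congr 2
      omega
    · refine Commute.sum_right _ _ _ ?_
      intro k _
      exact ((Commute.refl J).pow_right _).smul_right _
  -- S nilpotent, 1 + S is a unit
  have hunit : IsUnit (1 + S) := by
    obtain ⟨B, hB, hcomm⟩ := hSB
    refine IsNilpotent.isUnit_one_add ⟨n, ?_⟩
    rw [hB, hcomm.mul_pow, hJn, zero_mul]
  have hdet : IsUnit (1 + S).det := (Matrix.isUnit_iff_isUnit_det _).mp hunit
  have hinvmul : (1 + S)⁻¹ * (1 + S) = 1 := Matrix.nonsing_inv_mul _ hdet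
  -- first column of 1 + S
  have hCcol : ∀ m : Fin n, (1 + S) m z = if m = z then 1 else 0 := by
    intro m
    have hSmz : S m z = 0 := by
      rw [hS, Matrix.sum_apply]
      refine Finset.sum_eq_zero ?_
      intro k hk
      simp only [Finset.mem_Icc] at hk
      rw [Matrix.smul_apply, hJp, if_neg (by simp [hz]; omega), smul_zero]
    rw [Matrix.add_apply, hSmz, add_zero, Matrix.one_apply]
  -- first column of (1 + S)⁻¹
  have hIcol : ∀ m : Fin n, (1 + S)⁻¹ m z = if m = z then 1 else 0 := by
    intro m
    have h1 := congrFun (congrFun hinvmul m) z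
    rw [Matrix.mul_apply] at h1
    simp only [hCcol, mul_ite, mul_one, mul_zero, Finset.sum_ite_eq',
      Finset.mem_univ, if_true] at h1
    rw [h1, Matrix.one_apply]
  -- main entry computation
  have hmain : ∀ i : Fin n, ((1 + S) * A * (1 + S)⁻¹) i z
      = v i + ∑ k ∈ Finset.Icc 1 (n - 1), c k * v ((i : ℕ) + k) := by
    intro i
    rw [Matrix.mul_apply]
    simp only [hIcol, mul_ite, mul_one, mul_zero, Finset.sum_ite_eq',
      Finset.mem_univ, if_true]
    rw [Matrix.add_mul, Matrix.one_mul, Matrix.add_apply]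
    congr 1
    · simp only [hv]
      rw [dif_pos i.isLt]
    · rw [hS, Finset.sum_mul, Matrix.sum_apply]
      refine Finset.sum_congr rfl ?_
      intro k hk
      rw [Matrix.smul_mul, Matrix.smul_apply, Matrix.mul_apply]
      simp only [hJp, ite_mul, one_mul, zero_mul]
      rw [smul_eq_mul]
      congr 1
      by_cases h : (i : ℕ) + k < n
      · rw [Finset.sum_eq_single (⟨(i : ℕ) + k, h⟩ : Fin n)]
        · rw [if_pos rfl]
          simp only [hv]
          rw [dif_pos h]
        · intro m _ hm
          rw [if_neg (by simp [Fin.ext_iff] at hm ⊢; omega)]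
        · intro hm; exact absurd (Finset.mem_univ _) hm
      · rw [Finset.sum_eq_zero]
        · simp only [hv]
          rw [dif_neg h]
        · intro m _
          rw [if_neg (by omega)]
  constructor
  · intro i hi
    have := hmain i
    rw [key1 v n l hl2 hln hvl hv0 i hi] at this
    exact this
  · have := hmain ⟨l - 1, by omega⟩
    simp only at this
    rw [key2 v n l hl2 hv0] at this
    rw [this]
    simp only [hv]
    rw [dif_pos (show l - 1 < n by omega)]
end

section
/- Let n ≥ 2 and K a field, and let S = J_n + Z be an affine subspace of M(n×n,K) with all elements nilpotent of rank n-1, where every element of Z is block upper triangular with diagonal blocks of sizes r×r and (n-r)×(n-r) for some fixed r ∈ {1,…,n-1}. Assume for every n' ∈ {1,…,n-1} that every affine subspace of nilpotent n'×n' matrices of rank n'-1 has dimension at most (n'-1)(n'-2)/2. Then dim Z ≤ (n-1)(n-2)/2. -/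
/-!
Write `n = r + s`. Restricting `Z` to the two diagonal blocks gives spaces of the same kind
for sizes `r` and `s` (a nilpotent block upper triangular matrix of corank one has nilpotent
diagonal blocks of corank one), so their dimensions are at most `C(r-1, 2)` and `C(s-1, 2)`.
An element of `Z` with vanishing diagonal blocks lives in the upper right `r × s` block, and
its entry at position `(r-1, r)` must vanish: otherwise a multiple of it cancels the `1` of `J`
there, and then row `r - 1` of `J + A` is a combination of the rows below it, while the last
row vanishes, forcing rank `≤ n - 2`. Hence
`dim Z ≤ C(r-1, 2) + C(s-1, 2) + (r s - 1) = C(n-1, 2)`.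
-/

open Matrix Module Submodule

theorem Nat.choose_two_sub_one_add {r s : ℕ} (hr : 1 ≤ r) (hs : 1 ≤ s) :
    (r - 1).choose 2 + (s - 1).choose 2 + (r * s - 1) = (r + s - 1).choose 2 := by
  obtain ⟨a, rfl⟩ := Nat.exists_eq_add_of_le' hr
  obtain ⟨b, rfl⟩ := Nat.exists_eq_add_of_le' hs
  have hmul : (a + 1) * (b + 1) - 1 = a * b + a + b := by ring_nf; omega
  rw [show a + 1 + (b + 1) - 1 = a + b + 1 by omega, Nat.add_sub_cancel, Nat.add_sub_cancel, hmul]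
  apply Nat.cast_injective (R := ℚ)
  push_cast [Nat.cast_choose_two]
  ring

theorem Nat.sub_one_mul_sub_two_div_two (n : ℕ) : (n - 1) * (n - 2) / 2 = (n - 1).choose 2 := by
  rw [Nat.choose_two_right, Nat.sub_sub]

theorem Submodule.finrank_le_finrank_map_add_finrank_map_add_finrank_ker {K V W₁ W₂ : Type*}
    [Field K] [AddCommGroup V] [Module K V] [FiniteDimensional K V] [AddCommGroup W₁]
    [Module K W₁] [FiniteDimensional K W₁] [AddCommGroup W₂] [Module K W₂] [FiniteDimensional K W₂]
    (p : Submodule K V) (f : V →ₗ[K] W₁) (g : V →ₗ[K] W₂) :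
    finrank K p ≤ finrank K (p.map f) + finrank K (p.map g) +
      finrank K (LinearMap.ker ((f.prod g).domRestrict p)) := by
  rw [← LinearMap.finrank_range_add_finrank_ker ((f.prod g).domRestrict p)]
  gcongr
  calc finrank K (LinearMap.range ((f.prod g).domRestrict p))
      ≤ finrank K ((p.map f).prod (p.map g)) := by
        refine Submodule.finrank_mono ?_
        rintro _ ⟨x, rfl⟩
        exact ⟨⟨x, x.2, rfl⟩, ⟨x, x.2, rfl⟩⟩
    _ ≤ finrank K (p.map f) + finrank K (p.map g) := by
        rw [LinearMap.prod_eq_sup_map]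
        exact (finrank_add_le_finrank_add_finrank _ _).trans
          (add_le_add (finrank_map_le _ _) (finrank_map_le _ _))

namespace Matrix

variable {K : Type*} [Field K]

section Rank

variable {l m n p : Type*} [Fintype m] [Fintype p]

theorem rank_fromRows_le [Fintype n] (A₁ : Matrix m n K) (A₂ : Matrix p n K) :
    (fromRows A₁ A₂).rank ≤ A₁.rank + A₂.rank := by
  rw [rank_eq_finrank_span_row, rank_eq_finrank_span_row, rank_eq_finrank_span_row]
  have hrows : Set.range (fromRows A₁ A₂).row = Set.range A₁.row ∪ Set.range A₂.row :=
    Set.Sum.elim_range _ _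
  rw [hrows, span_union]
  exact finrank_add_le_finrank_add_finrank _ _

theorem rank_fromCols_le [Fintype n] (A₁ : Matrix n m K) (A₂ : Matrix n p K) :
    (fromCols A₁ A₂).rank ≤ A₁.rank + A₂.rank := by
  rw [← rank_transpose, transpose_fromCols, ← rank_transpose A₁, ← rank_transpose A₂]
  exact rank_fromRows_le _ _

theorem rank_fromBlocks_zero₂₁_le_left (B : Matrix m m K) (C : Matrix m p K) (D : Matrix p p K) :
    (fromBlocks B C 0 D).rank ≤ B.rank + Fintype.card p := by
  rw [← fromCols_fromRows_eq_fromBlocks]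
  calc _ ≤ (fromRows B 0).rank + (fromRows C D).rank := rank_fromCols_le _ _
    _ ≤ (B.rank + (0 : Matrix p m K).rank) + Fintype.card p :=
        add_le_add (rank_fromRows_le _ _) (rank_le_card_width _)
    _ = B.rank + Fintype.card p := by rw [rank_zero, add_zero]

theorem rank_fromBlocks_zero₂₁_le_right (B : Matrix m m K) (C : Matrix m p K) (D : Matrix p p K) :
    (fromBlocks B C 0 D).rank ≤ Fintype.card m + D.rank := by
  rw [← fromRows_fromCols_eq_fromBlocks]
  calc _ ≤ (fromCols B C).rank + (fromCols 0 D).rank := rank_fromRows_le _ _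
    _ ≤ Fintype.card m + ((0 : Matrix p m K).rank + D.rank) :=
        add_le_add (rank_le_card_height _) (rank_fromCols_le _ _)
    _ = Fintype.card m + D.rank := by rw [rank_zero, zero_add]

theorem rank_le_card_of_forall_row_mem_span [Finite l] [Fintype n] (A : Matrix l n K)
    (s : Finset l) (h : ∀ i, A.row i ∈ span K (A.row '' s)) : A.rank ≤ s.card := by
  classical
  rw [rank_eq_finrank_span_row]
  calc finrank K (span K (Set.range A.row))
      ≤ finrank K (span K ((s.image A.row : Finset (n → K)) : Set (n → K))) := by
        refine Submodule.finrank_mono (span_le.mpr ?_)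
        rintro _ ⟨i, rfl⟩
        rw [Finset.coe_image]
        exact h i
    _ ≤ (s.image A.row).card := finrank_span_finset_le_card _
    _ ≤ s.card := Finset.card_image_le

theorem _root_.IsNilpotent.rank_lt_card [DecidableEq m] [Nonempty m] {A : Matrix m m K}
    (hA : IsNilpotent A) : A.rank < Fintype.card m := by
  refine (rank_le_card_height A).lt_of_ne fun h => hA.not_isUnit ?_
  refine mulVec_surjective_iff_isUnit.mp ((LinearMap.range_eq_top (f := A.mulVecLin)).mp ?_)
  exact eq_top_of_finrank_eq (h.trans (finrank_pi K).symm)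

end Rank

section RegularNilpotent

variable {l m p : Type*} [Fintype l] [Fintype m] [Fintype p]
  [DecidableEq l] [DecidableEq m] [DecidableEq p]

theorem fromBlocks_zero₂₁_pow (B : Matrix m m K) (C : Matrix m p K) (D : Matrix p p K) (k : ℕ) :
    ∃ C', fromBlocks B C 0 D ^ k = fromBlocks (B ^ k) C' 0 (D ^ k) := by
  induction k with
  | zero => exact ⟨0, by simp [fromBlocks_one]⟩
  | succ k ih =>
    obtain ⟨C', h⟩ := ih
    exact ⟨B ^ k * C + C' * D, by simp [pow_succ, h, fromBlocks_multiply]⟩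

theorem _root_.IsNilpotent.of_fromBlocks_zero₂₁ {B : Matrix m m K} {C : Matrix m p K}
    {D : Matrix p p K} (h : IsNilpotent (fromBlocks B C 0 D)) :
    IsNilpotent B ∧ IsNilpotent D := by
  obtain ⟨k, hk⟩ := h
  obtain ⟨C', hpow⟩ := fromBlocks_zero₂₁_pow B C D k
  rw [hk, ← fromBlocks_zero, fromBlocks_inj] at hpow
  exact ⟨⟨k, hpow.1.symm⟩, ⟨k, hpow.2.2.2.symm⟩⟩

def IsRegularNilpotent (A : Matrix m m K) : Prop :=
  IsNilpotent A ∧ A.rank = Fintype.card m - 1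

theorem isRegularNilpotent_fin_iff {n : ℕ} {A : Matrix (Fin n) (Fin n) K} :
    A.IsRegularNilpotent ↔ IsNilpotent A ∧ A.rank = n - 1 := by
  rw [IsRegularNilpotent, Fintype.card_fin]

theorem IsRegularNilpotent.submatrix {A : Matrix m m K} (hA : A.IsRegularNilpotent) (e : l ≃ m) :
    (A.submatrix e e).IsRegularNilpotent := by
  refine ⟨?_, by rw [rank_submatrix, hA.2, Fintype.card_congr e]⟩
  simpa [coe_reindexAlgEquiv] using hA.1.map (reindexAlgEquiv K K e.symm)

theorem IsRegularNilpotent.of_fromBlocks_zero₂₁ [Nonempty m] [Nonempty p] {B : Matrix m m K}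
    {C : Matrix m p K} {D : Matrix p p K} (h : (fromBlocks B C 0 D).IsRegularNilpotent) :
    B.IsRegularNilpotent ∧ D.IsRegularNilpotent := by
  obtain ⟨hB, hD⟩ := h.1.of_fromBlocks_zero₂₁
  have hrank := h.2
  rw [Fintype.card_sum] at hrank
  have := hB.rank_lt_card
  have := hD.rank_lt_card
  have := rank_fromBlocks_zero₂₁_le_left B C D
  have := rank_fromBlocks_zero₂₁_le_right B C D
  exact ⟨⟨hB, by omega⟩, ⟨hD, by omega⟩⟩

end RegularNilpotent

section Jordan

def nilpotentJordanBlock (K : Type*) [Field K] (n : ℕ) : Matrix (Fin n) (Fin n) K :=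
  of fun i j => if (i : ℕ) + 1 = (j : ℕ) then 1 else 0

theorem nilpotentJordanBlock_row_pred {n : ℕ} (j : Fin n) (hj : 0 < (j : ℕ)) :
    nilpotentJordanBlock K n ⟨j - 1, by omega⟩ = Pi.single j 1 := by
  ext k
  simp only [nilpotentJordanBlock, of_apply, Pi.single_apply, Fin.ext_iff]
  congr 1
  exact propext ⟨fun h => by omega, fun h => by omega⟩

theorem nilpotentJordanBlock_row_last {n : ℕ} (hn : 0 < n) :
    nilpotentJordanBlock K n ⟨n - 1, by omega⟩ = 0 := by
  ext k
  simp only [nilpotentJordanBlock, of_apply]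
  exact if_neg (by omega)

theorem mem_span_row_of_eq_nilpotentJordanBlock {n r : ℕ} {M : Matrix (Fin n) (Fin n) K}
    (hM : ∀ i : Fin n, r ≤ i → M i = nilpotentJordanBlock K n i) {s : Finset (Fin n)}
    (hs : ∀ i : Fin n, r ≤ (i : ℕ) → (i : ℕ) + 1 < n → i ∈ s) {v : Fin n → K}
    (hv : ∀ j : Fin n, (j : ℕ) ≤ r → v j = 0) : v ∈ span K (M.row '' s) := by
  rw [← Finset.univ_sum_single v]
  refine sum_mem fun j _ => ?_
  by_cases hj : (j : ℕ) ≤ r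
  · rw [hv j hj, Pi.single_zero]
    exact zero_mem _
  have hshift : Pi.single j (v j) = v j • M.row ⟨j - 1, by omega⟩ := by
    rw [row, hM ⟨j - 1, by omega⟩ (show r ≤ j - 1 by omega),
      nilpotentJordanBlock_row_pred j (by omega), ← Pi.single_smul, smul_eq_mul, mul_one]
  rw [hshift]
  have hmem : (⟨j - 1, by omega⟩ : Fin n) ∈ s := hs _ (show r ≤ j - 1 by omega) (by simp; omega)
  exact smul_mem _ _ (subset_span ⟨_, hmem, rfl⟩)

theorem rank_nilpotentJordanBlock_add_le {n r : ℕ} (hr : 0 < r) (hrn : r < n)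
    (A : Matrix (Fin n) (Fin n) K) (hlow : ∀ i : Fin n, r ≤ i → A i = 0)
    (htop : ∀ j : Fin n, j < r → A ⟨r - 1, by omega⟩ j = 0)
    (hcorner : A ⟨r - 1, by omega⟩ ⟨r, hrn⟩ = -1) :
    (nilpotentJordanBlock K n + A).rank ≤ n - 2 := by
  set M := nilpotentJordanBlock K n + A
  set a : Fin n := ⟨r - 1, by omega⟩
  set b : Fin n := ⟨n - 1, by omega⟩
  have hlowM : ∀ i : Fin n, r ≤ i → M i = nilpotentJordanBlock K n i := fun i hi => by
    ext j
    simp [M, congrFun (hlow i hi) j]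
  have hrowa : ∀ j : Fin n, (j : ℕ) ≤ r → M a j = 0 := by
    intro j hj
    rcases hj.lt_or_eq with hj | hj
    · simp [M, a, nilpotentJordanBlock, htop j hj]
      omega
    · obtain rfl : j = ⟨r, hrn⟩ := Fin.ext hj
      simp only [M, add_apply, hcorner, nilpotentJordanBlock, of_apply]
      rw [if_pos (by simp [a]; omega), add_neg_cancel]
  set s := (Finset.univ.erase a).erase b
  have hs : s.card = n - 2 := by
    rw [Finset.card_erase_of_mem, Finset.card_erase_of_mem (Finset.mem_univ _), Finset.card_univ,
      Fintype.card_fin]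
    · omega
    · simp [a, b, Fin.ext_iff]
      omega
  refine hs ▸ rank_le_card_of_forall_row_mem_span M s fun i => ?_
  by_cases hi : i ∈ s
  · exact subset_span ⟨i, hi, rfl⟩
  have hi : i = a ∨ i = b := by simp [s] at hi; tauto
  rcases hi with rfl | rfl
  · exact mem_span_row_of_eq_nilpotentJordanBlock hlowM
      (fun i hi hin => by simp [s, a, b, Fin.ext_iff]; omega) hrowa
  · change M b ∈ _
    rw [hlowM b (by simp [b]; omega), nilpotentJordanBlock_row_last (by omega)]
    exact zero_mem _

end Jordan

@[simps]
def submatrixLinearMap (R : Type*) [Semiring R] {l m n o : Type*} (f : l → m) (g : o → n) :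
    Matrix m n R →ₗ[R] Matrix l o R where
  toFun A := A.submatrix f g
  map_add' _ _ := rfl
  map_smul' _ _ := rfl

section TwoBlocks

variable {r s : ℕ}

def upperLeftBlock (r s : ℕ) :
    Matrix (Fin (r + s)) (Fin (r + s)) K →ₗ[K] Matrix (Fin r) (Fin r) K :=
  submatrixLinearMap K (Fin.castAdd s) (Fin.castAdd s)

def upperRightBlock (r s : ℕ) :
    Matrix (Fin (r + s)) (Fin (r + s)) K →ₗ[K] Matrix (Fin r) (Fin s) K :=
  submatrixLinearMap K (Fin.castAdd s) (Fin.natAdd r)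

def lowerRightBlock (r s : ℕ) :
    Matrix (Fin (r + s)) (Fin (r + s)) K →ₗ[K] Matrix (Fin s) (Fin s) K :=
  submatrixLinearMap K (Fin.natAdd r) (Fin.natAdd r)

theorem submatrix_finSumFinEquiv_eq_fromBlocks {A : Matrix (Fin (r + s)) (Fin (r + s)) K}
    (h : ∀ i j, A (Fin.natAdd r i) (Fin.castAdd s j) = 0) :
    A.submatrix finSumFinEquiv finSumFinEquiv =
      fromBlocks (upperLeftBlock r s A) (upperRightBlock r s A) 0 (lowerRightBlock r s A) := by
  ext (i | i) (j | j) <;> simp [upperLeftBlock, upperRightBlock, lowerRightBlock, h]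

theorem IsRegularNilpotent.upperLeftBlock_and_lowerRightBlock
    {M : Matrix (Fin (r + s)) (Fin (r + s)) K}
    (hM : M.IsRegularNilpotent) (hr : 0 < r) (hs : 0 < s)
    (hlower : ∀ i j, M (Fin.natAdd r i) (Fin.castAdd s j) = 0) :
    (upperLeftBlock r s M).IsRegularNilpotent ∧ (lowerRightBlock r s M).IsRegularNilpotent := by
  have : Nonempty (Fin r) := ⟨⟨0, hr⟩⟩
  have : Nonempty (Fin s) := ⟨⟨0, hs⟩⟩
  exact (submatrix_finSumFinEquiv_eq_fromBlocks hlower ▸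
    hM.submatrix finSumFinEquiv).of_fromBlocks_zero₂₁

theorem nilpotentJordanBlock_natAdd_castAdd (i : Fin s) (j : Fin r) :
    nilpotentJordanBlock K (r + s) (Fin.natAdd r i) (Fin.castAdd s j) = 0 := by
  simp only [nilpotentJordanBlock, of_apply, Fin.val_natAdd, Fin.val_castAdd]
  exact if_neg (by omega)

theorem upperRightBlock_corner_eq_zero (hr : 0 < r) (hs : 0 < s)
    {Z : Submodule K (Matrix (Fin (r + s)) (Fin (r + s)) K)}
    (hblock : ∀ A ∈ Z, ∀ i j, A (Fin.natAdd r i) (Fin.castAdd s j) = 0)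
    (hrank : ∀ A ∈ Z, (nilpotentJordanBlock K (r + s) + A).rank = r + s - 1)
    {A : Matrix (Fin (r + s)) (Fin (r + s)) K} (hA : A ∈ Z)
    (h₁ : upperLeftBlock r s A = 0) (h₂ : lowerRightBlock r s A = 0) :
    upperRightBlock r s A ⟨r - 1, by omega⟩ ⟨0, hs⟩ = 0 := by
  have hlow : ∀ i : Fin (r + s), r ≤ i → A i = 0 := by
    intro i hi
    ext j
    induction i using Fin.addCases with
    | left i => simp at hi; omega
    | right i =>
      induction j using Fin.addCases with
      | left j => exact hblock A hA i j
      | right j => simpa [lowerRightBlock] using congrFun (congrFun h₂ i) j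
  have htop : ∀ j : Fin (r + s), j < r → A ⟨r - 1, by omega⟩ j = 0 := fun j hj => by
    have := congrFun (congrFun h₁ ⟨r - 1, by omega⟩) ⟨j, hj⟩
    simp only [upperLeftBlock, submatrixLinearMap_apply, submatrix_apply, zero_apply] at this
    exact this
  by_contra ha
  set a := upperRightBlock r s A ⟨r - 1, by omega⟩ ⟨0, hs⟩
  have hcorner : ((-a⁻¹) • A) ⟨r - 1, by omega⟩ ⟨r, by omega⟩ = -1 := by
    change -a⁻¹ * a = -1
    rw [neg_mul, inv_mul_cancel₀ ha]
  have hle := rank_nilpotentJordanBlock_add_le hr (by omega) ((-a⁻¹) • A)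
    (fun i hi => by
      change (-a⁻¹) • A i = 0
      rw [hlow i hi, smul_zero])
    (fun j hj => by simp [htop j hj]) hcorner
  have := hrank _ (Z.smul_mem (-a⁻¹) hA)
  omega

theorem finrank_ker_upperLeftBlock_prod_lowerRightBlock_lt (hr : 0 < r) (hs : 0 < s)
    {Z : Submodule K (Matrix (Fin (r + s)) (Fin (r + s)) K)}
    (hblock : ∀ A ∈ Z, ∀ i j, A (Fin.natAdd r i) (Fin.castAdd s j) = 0)
    (hrank : ∀ A ∈ Z, (nilpotentJordanBlock K (r + s) + A).rank = r + s - 1) :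
    finrank K (LinearMap.ker (((upperLeftBlock r s).prod (lowerRightBlock r s)).domRestrict Z))
      < r * s := by
  set ψ := ((upperLeftBlock r s).prod (lowerRightBlock (K := K) r s)).domRestrict Z
  have hdiag : ∀ x : LinearMap.ker ψ,
      upperLeftBlock r s (x : Z).1 = 0 ∧ lowerRightBlock r s (x : Z).1 = 0 := fun x => by
    have h := LinearMap.mem_ker.mp x.2
    rw [LinearMap.domRestrict_apply, LinearMap.prod_apply, Prod.mk_eq_zero] at h
    exact h
  let χ : LinearMap.ker ψ →ₗ[K] Matrix (Fin r) (Fin s) K :=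
    upperRightBlock r s ∘ₗ Z.subtype ∘ₗ (LinearMap.ker ψ).subtype
  have hχ : Function.Injective χ := by
    intro x y hxy
    obtain ⟨hx₁, hx₂⟩ := hdiag x
    obtain ⟨hy₁, hy₂⟩ := hdiag y
    refine Subtype.ext (Subtype.ext ?_)
    ext i j
    induction i using Fin.addCases <;> induction j using Fin.addCases
    · exact (congrFun (congrFun hx₁ _) _).trans (congrFun (congrFun hy₁ _) _).symm
    · exact congrFun (congrFun hxy _) _
    · exact (hblock _ (x : Z).2 _ _).trans (hblock _ (y : Z).2 _ _).symm
    · exact (congrFun (congrFun hx₂ _) _).trans (congrFun (congrFun hy₂ _) _).symm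
  have hrange : LinearMap.range χ ≠ ⊤ := by
    intro htop
    obtain ⟨x, hx⟩ : single ⟨r - 1, by omega⟩ ⟨0, hs⟩ (1 : K) ∈ LinearMap.range χ :=
      htop ▸ mem_top
    have := upperRightBlock_corner_eq_zero hr hs hblock hrank (x : Z).2 (hdiag x).1 (hdiag x).2
    change χ x ⟨r - 1, by omega⟩ ⟨0, hs⟩ = 0 at this
    simp [hx] at this
  calc finrank K (LinearMap.ker ψ) = finrank K (LinearMap.range χ) :=
        (LinearMap.finrank_range_of_inj hχ).symm
    _ < finrank K (Matrix (Fin r) (Fin s) K) := Submodule.finrank_lt hrange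
    _ = r * s := by simp [Module.finrank_matrix]

end TwoBlocks

end Matrix

theorem stmt13_general (n : ℕ) (K : Type*) [Field K]
    (r : ℕ) (hr1 : 1 ≤ r) (hrn : r ≤ n - 1)
    (J : Matrix (Fin n) (Fin n) K)
    (hJ : J = Matrix.of fun (i j : Fin n) => if (i : ℕ) + 1 = (j : ℕ) then 1 else 0)
    (Z : Submodule K (Matrix (Fin n) (Fin n) K))
    (hblock : ∀ A ∈ Z, ∀ i j : Fin n, r ≤ (i : ℕ) → (j : ℕ) < r → A i j = 0)
    (hS : ∀ A ∈ Z, IsNilpotent (J + A) ∧ (J + A).rank = n - 1)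
    (hind : ∀ n' : ℕ, 1 ≤ n' → n' ≤ n - 1 →
      ∀ (Z' : Submodule K (Matrix (Fin n') (Fin n') K)) (P : Matrix (Fin n') (Fin n') K),
        (∀ A ∈ Z', IsNilpotent (P + A) ∧ (P + A).rank = n' - 1) →
        Module.finrank K Z' ≤ (n' - 1) * (n' - 2) / 2) :
    Module.finrank K Z ≤ (n - 1) * (n - 2) / 2 := by
  obtain ⟨s, rfl⟩ : ∃ s, n = r + s := ⟨n - r, by omega⟩
  replace hJ : J = nilpotentJordanBlock K (r + s) := hJ
  subst hJ
  have hs : 1 ≤ s := by omega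
  have hlower : ∀ A ∈ Z, ∀ i j, A (Fin.natAdd r i) (Fin.castAdd s j) = 0 := fun A hA i j =>
    hblock A hA _ _ (by simp) (by simp)
  have hdiag (A) (hA : A ∈ Z) :=
    (isRegularNilpotent_fin_iff.mpr (hS A hA)).upperLeftBlock_and_lowerRightBlock hr1 hs
      fun i j => by simp [nilpotentJordanBlock_natAdd_castAdd, hlower A hA i j]
  have hmap {m : ℕ} (f : Matrix (Fin (r + s)) (Fin (r + s)) K →ₗ[K] Matrix (Fin m) (Fin m) K)
      (hf : ∀ A ∈ Z, (f (nilpotentJordanBlock K (r + s) + A)).IsRegularNilpotent) :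
      ∀ B ∈ Z.map f, IsNilpotent (f (nilpotentJordanBlock K (r + s)) + B) ∧
        (f (nilpotentJordanBlock K (r + s)) + B).rank = m - 1 := by
    rintro _ ⟨A, hA, rfl⟩
    exact isRegularNilpotent_fin_iff.mp (map_add f _ A ▸ hf A hA)
  have h₁ := hind r hr1 hrn _ _ (hmap _ fun A hA => (hdiag A hA).1)
  have h₂ := hind s hs (by omega) _ _ (hmap _ fun A hA => (hdiag A hA).2)
  have h₀ := finrank_ker_upperLeftBlock_prod_lowerRightBlock_lt hr1 hs hlower
    fun A hA => (hS A hA).2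
  rw [Nat.sub_one_mul_sub_two_div_two] at h₁ h₂
  calc finrank K Z
      ≤ finrank K (Z.map (upperLeftBlock r s)) + finrank K (Z.map (lowerRightBlock r s)) +
          finrank K (LinearMap.ker (((upperLeftBlock r s).prod
            (lowerRightBlock r s)).domRestrict Z)) :=
        Z.finrank_le_finrank_map_add_finrank_map_add_finrank_ker _ _
    _ ≤ (r - 1).choose 2 + (s - 1).choose 2 + (r * s - 1) := by omega
    _ = (r + s - 1) * (r + s - 2) / 2 := by
        rw [Nat.choose_two_sub_one_add hr1 hs, Nat.sub_one_mul_sub_two_div_two]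

/-- Lemma on block upper triangular directions: if every element of `J + Z` is nilpotent of
rank `n-1`, every element of `Z` is block upper triangular with diagonal blocks of sizes
`r` and `n-r`, and the dimension bound `(n'-1)(n'-2)/2` holds for all sizes `n' < n`, then
`dim Z ≤ (n-1)(n-2)/2`. -/
theorem stmt13 (n : ℕ) (hn : 2 ≤ n) (K : Type*) [Field K]
    (r : ℕ) (hr1 : 1 ≤ r) (hrn : r ≤ n - 1)
    (J : Matrix (Fin n) (Fin n) K)
    (hJ : J = Matrix.of fun (i j : Fin n) => if (i : ℕ) + 1 = (j : ℕ) then 1 else 0)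
    (Z : Submodule K (Matrix (Fin n) (Fin n) K))
    (hblock : ∀ A ∈ Z, ∀ i j : Fin n, r ≤ (i : ℕ) → (j : ℕ) < r → A i j = 0)
    (hS : ∀ A ∈ Z, IsNilpotent (J + A) ∧ (J + A).rank = n - 1)
    (hind : ∀ n' : ℕ, 1 ≤ n' → n' ≤ n - 1 →
      ∀ (Z' : Submodule K (Matrix (Fin n') (Fin n') K)) (P : Matrix (Fin n') (Fin n') K),
        (∀ A ∈ Z', IsNilpotent (P + A) ∧ (P + A).rank = n' - 1) →
        Module.finrank K Z' ≤ (n' - 1) * (n' - 2) / 2) :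
    Module.finrank K Z ≤ (n - 1) * (n - 2) / 2 :=
  stmt13_general n K r hr1 hrn J hJ Z hblock hS hind
end

section
/- Let K be a field with |K| ≥ 3, n ≥ 2, and let Z be a linear subspace of M(n×n,K) such that every element of E_{1,2} + Z is nilpotent of rank 1. Then for every Y ∈ Z, either (Y has all rows 2,…,n zero and Y_{1,1} = 0) or (Y has all columns except column 2 zero and Y_{2,2} = 0). -/
/-!
Every `2 × 2` minor of a rank-one matrix vanishes. For the minor of `E + sY` on rows `1, k` and
columns `2, l` with `k ≠ 1`, `l ≠ 2`, this is a polynomial identity in `s` whose linear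
coefficient is `Y k l`; evaluating at `s = 1` and at a third field element `t ∉ {0, 1}` shows
that `Y` lives on row `1` and column `2`. The minor at `s = 1` then forces `Y 1 l * Y k 2 = 0`,
so one of the two arms vanishes, and nilpotency of `E + Y` gives `Y 1 1 + Y 2 2 = 0` through
the trace.
-/

namespace Matrix

variable {m n R : Type*} [Fintype n] [CommRing R] [IsDomain R]

theorem mul_eq_mul_of_rank_le_one {A : Matrix m n R} (hA : A.rank ≤ 1) (i k : m) (j l : n) :
    A i j * A k l = A i l * A k j := by
  by_contra hne
  have hdet : (A.submatrix ![i, k] ![j, l]).det ∈ nonZeroDivisors R := by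
    refine mem_nonZeroDivisors_of_ne_zero ?_
    rw [det_fin_two]
    simpa [sub_eq_zero] using hne
  have := (rank_of_det_mem_nonZeroDivisors hdet).symm.trans_le
    ((A.rank_submatrix_le _ _).trans hA)
  simp at this

section SingleAdd

variable [DecidableEq m] [DecidableEq n] {a k : m} {b l : n} {Y : Matrix m n R}

theorem apply_eq_zero_of_rank_single_add_smul_le_one {t : R} (ht0 : t ≠ 0) (ht1 : t ≠ 1)
    (h1 : (single a b 1 + Y).rank ≤ 1) (ht : (single a b 1 + t • Y).rank ≤ 1)
    (hk : k ≠ a) (hl : l ≠ b) : Y k l = 0 := by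
  have m1 := mul_eq_mul_of_rank_le_one h1 a k b l
  have mt := mul_eq_mul_of_rank_le_one ht a k b l
  simp only [add_apply, smul_apply, smul_eq_mul, single_apply_same,
    single_apply_of_row_ne hk.symm, single_apply_of_col_ne _ _ hl.symm, zero_add] at m1 mt
  have key : t * (1 - t) * Y k l = 0 := by linear_combination mt - t ^ 2 * m1
  exact (mul_eq_zero.mp key).resolve_left (mul_ne_zero ht0 (sub_ne_zero.mpr ht1.symm))

theorem apply_mul_apply_eq_zero_of_rank_single_add_le_one (h1 : (single a b 1 + Y).rank ≤ 1)
    (hk : k ≠ a) (hl : l ≠ b) (hkl : Y k l = 0) : Y a l * Y k b = 0 := by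
  have m1 := mul_eq_mul_of_rank_le_one h1 a k b l
  simp only [add_apply, single_apply_same, single_apply_of_row_ne hk.symm,
    single_apply_of_col_ne _ _ hl.symm, zero_add, add_zero, hkl, mul_zero] at m1
  exact m1.symm

end SingleAdd

section Square

variable {ι : Type*} [Fintype ι] [DecidableEq ι] {a b : ι} {Y : Matrix ι ι R}

theorem apply_self_add_apply_self_eq_zero (hab : a ≠ b)
    (hnil : IsNilpotent (single a b 1 + Y)) (hoff : ∀ k ≠ a, ∀ l ≠ b, Y k l = 0) :
    Y a a + Y b b = 0 := by
  have htr := (isNilpotent_trace_of_isNilpotent hnil).eq_zero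
  rw [trace_add, trace_single_eq_of_ne _ _ _ hab, zero_add, trace,
    Fintype.sum_eq_add (f := Y.diag) a b hab fun x hx => hoff x hx.1 x hx.2] at htr
  exact htr

theorem eq_zero_off_row_or_eq_zero_off_col (hab : a ≠ b)
    (hoff : ∀ k ≠ a, ∀ l ≠ b, Y k l = 0) (hprod : ∀ k ≠ a, ∀ l ≠ b, Y a l * Y k b = 0)
    (htr : Y a a + Y b b = 0) :
    ((∀ i ≠ a, ∀ j, Y i j = 0) ∧ Y a a = 0) ∨ ((∀ j ≠ b, ∀ i, Y i j = 0) ∧ Y b b = 0) := by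
  by_cases hrow : ∀ l ≠ b, Y a l = 0
  · have hcols : ∀ j ≠ b, ∀ i, Y i j = 0 := fun j hj i => by
      rcases eq_or_ne i a with rfl | hi
      exacts [hrow j hj, hoff i hi j hj]
    refine .inr ⟨hcols, ?_⟩
    simpa [hcols a hab] using htr
  · obtain ⟨l, hl, hal⟩ := not_forall₂.mp hrow
    have hrows : ∀ i ≠ a, ∀ j, Y i j = 0 := fun i hi j => by
      rcases eq_or_ne j b with rfl | hj
      exacts [(mul_eq_zero.mp (hprod i hi l hl)).resolve_left hal, hoff i hi j hj]
    refine .inl ⟨hrows, ?_⟩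
    simpa [hrows b hab.symm] using htr

theorem eq_zero_off_row_or_eq_zero_off_col_of_single_add_smul {t : R} (hab : a ≠ b)
    (ht0 : t ≠ 0) (ht1 : t ≠ 1) (hnil : IsNilpotent (single a b 1 + Y))
    (h1 : (single a b 1 + Y).rank ≤ 1) (ht : (single a b 1 + t • Y).rank ≤ 1) :
    ((∀ i ≠ a, ∀ j, Y i j = 0) ∧ Y a a = 0) ∨ ((∀ j ≠ b, ∀ i, Y i j = 0) ∧ Y b b = 0) := by
  have hoff : ∀ k ≠ a, ∀ l ≠ b, Y k l = 0 := fun k hk l hl =>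
    apply_eq_zero_of_rank_single_add_smul_le_one ht0 ht1 h1 ht hk hl
  exact eq_zero_off_row_or_eq_zero_off_col hab hoff
    (fun k hk l hl => apply_mul_apply_eq_zero_of_rank_single_add_le_one h1 hk hl (hoff k hk l hl))
    (apply_self_add_apply_self_eq_zero hab hnil hoff)

end Square

end Matrix

/-- If every element of `E_{1,2} + Z` is nilpotent of rank `1` over a field with at least
`3` elements, then each `Y ∈ Z` either has rows `2,…,n` zero and `Y_{1,1} = 0`, or has all
columns but the second zero and `Y_{2,2} = 0`. -/
theorem stmt16 (n : ℕ) (hn : 2 ≤ n) (K : Type*) [Field K]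
    (hK : (3 : Cardinal) ≤ Cardinal.mk K)
    (Z : Submodule K (Matrix (Fin n) (Fin n) K))
    (hS : ∀ A ∈ Z,
      IsNilpotent (Matrix.single (⟨0, by omega⟩ : Fin n) (⟨1, by omega⟩ : Fin n)
        (1 : K) + A) ∧
      (Matrix.single (⟨0, by omega⟩ : Fin n) (⟨1, by omega⟩ : Fin n) (1 : K)
        + A).rank = 1) :
    ∀ Y ∈ Z,
      ((∀ i : Fin n, 1 ≤ (i : ℕ) → ∀ j : Fin n, Y i j = 0) ∧
        Y ⟨0, by omega⟩ ⟨0, by omega⟩ = 0) ∨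
      ((∀ j : Fin n, (j : ℕ) ≠ 1 → ∀ i : Fin n, Y i j = 0) ∧
        Y ⟨1, by omega⟩ ⟨1, by omega⟩ = 0) := by
  intro Y hY
  obtain ⟨t, ht0, ht1⟩ := Cardinal.exists_ne_ne_of_three_le hK 0 1
  have hSt := hS (t • Y) (Z.smul_mem t hY)
  rcases Matrix.eq_zero_off_row_or_eq_zero_off_col_of_single_add_smul
      (by simp [Fin.ext_iff]) ht0 ht1 (hS Y hY).1 (hS Y hY).2.le hSt.2.le with
    ⟨hrows, h00⟩ | ⟨hcols, h11⟩
  · exact .inl ⟨fun i hi => hrows i (by simp [Fin.ext_iff]; omega), h00⟩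
  · exact .inr ⟨fun j hj => hcols j (by simpa [Fin.ext_iff] using hj), h11⟩
end
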